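/- arXiv:2111.01579 — 3 statements merged into one kernel-verified Lean document; each statement's English description precedes it below -/
import Mathlib

section
/- For every integer n ≥ 1, f(2^{2n} + 2^{2n+3}ℤ₂) = 2^{2n−2} + 2^{2n+1}ℤ₂ as sets. -/
/-! On the disk `2^{2n} + 2^{2n+3}ℤ₂` we have `|x|₂ ≤ 1/4`, and the identity
`f x - f z - (9/4)(x - z) = (9/4)(x - z)((x + z)(x + z - 2) - x z)` shows that `f` is the
similarity `x ↦ (9/4) x` up to an error of relative size `1/8`. In a complete ultrametric space
such a map sends a closed disk of radius `r` onto the closed disk of radius `|9/4|₂ r = 4 r`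
around the image of its centre: the inclusion is the ultrametric inequality, and every point `y`
of the target is hit by the fixed point of the contraction `x ↦ x - (4/9)(f x - y)`.
Since `f(2^{2n}) ≡ 2^{2n-2} mod 2^{2n+1}`, that image disk is `2^{2n-2} + 2^{2n+1}ℤ₂`. -/

open Function Set

/-- The cubic polynomial `f(x) = (9/4)·x·(x−1)²` acting on `ℚ₂`. -/
noncomputable def f : ℚ_[2] → ℚ_[2] := fun x => (9 / 4 : ℚ_[2]) * x * (x - 1) ^ 2

open Metric IsUltrametricDist
open scoped NNReal

theorem IsUltrametricDist.norm_sub_le_max {G : Type*} [SeminormedAddGroup G]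
    [IsUltrametricDist G] (x y : G) : ‖x - y‖ ≤ max ‖x‖ ‖y‖ := by
  simpa only [sub_eq_add_neg, norm_neg] using norm_add_le_max x (-y)

section ApproxSimilarity

variable {𝕜 E : Type*} [NormedField 𝕜] [NormedAddCommGroup E] [NormedSpace 𝕜 E]

def ApproxSimilarityOn (g : E → E) (c : 𝕜) (κ : ℝ≥0) (s : Set E) : Prop :=
  ∀ x ∈ s, ∀ z ∈ s, ‖g x - g z - c • (x - z)‖ ≤ κ * ‖c‖ * ‖x - z‖

variable {g : E → E} {c : 𝕜} {κ : ℝ≥0} {a : E} {r : ℝ}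

theorem ApproxSimilarityOn.mono {s t : Set E} (h : ApproxSimilarityOn g c κ t) (hst : s ⊆ t) :
    ApproxSimilarityOn g c κ s :=
  fun x hx z hz => h x (hst hx) z (hst hz)

variable [IsUltrametricDist E]

theorem ApproxSimilarityOn.mapsTo_closedBall (h : ApproxSimilarityOn g c κ (closedBall a r))
    (hκ : κ ≤ 1) : MapsTo g (closedBall a r) (closedBall (g a) (‖c‖ * r)) := by
  intro x hx
  have hxa : ‖x - a‖ ≤ r := mem_closedBall_iff_norm.mp hx
  have herr : ‖g x - g a - c • (x - a)‖ ≤ ‖c‖ * r :=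
    calc _ ≤ κ * ‖c‖ * ‖x - a‖ := h x hx a (mem_closedBall_self ((norm_nonneg _).trans hxa))
      _ ≤ 1 * ‖c‖ * r := by gcongr; exact_mod_cast hκ
      _ = ‖c‖ * r := by rw [one_mul]
  have hlin : ‖c • (x - a)‖ ≤ ‖c‖ * r := by rw [norm_smul]; gcongr
  rw [mem_closedBall_iff_norm, ← sub_add_cancel (g x - g a) (c • (x - a))]
  exact (norm_add_le_max _ _).trans (max_le herr hlin)

theorem ApproxSimilarityOn.surjOn_closedBall [CompleteSpace E]
    (h : ApproxSimilarityOn g c κ (closedBall a r)) (hc : c ≠ 0) (hκ : κ < 1) :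
    SurjOn g (closedBall a r) (closedBall (g a) (‖c‖ * r)) := by
  intro y hy
  have hc' : 0 < ‖c‖ := norm_pos_iff.mpr hc
  have hya : ‖g a - y‖ ≤ ‖c‖ * r := by rw [norm_sub_rev]; exact mem_closedBall_iff_norm.mp hy
  have hr : 0 ≤ r := nonneg_of_mul_nonneg_right ((norm_nonneg _).trans hya) hc'
  -- Newton's iteration with the constant slope `c`: its fixed points are the preimages of `y`.
  set T : E → E := fun x => x - c⁻¹ • (g x - y)
  have hT : ∀ x ∈ closedBall a r, ∀ z ∈ closedBall a r, ‖T x - T z‖ ≤ κ * ‖x - z‖ := by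
    intro x hx z hz
    have : T x - T z = -(c⁻¹ • (g x - g z - c • (x - z))) := by
      simp only [T, smul_sub, smul_smul, inv_mul_cancel₀ hc, one_smul]; abel
    rw [this, norm_neg, norm_smul, norm_inv, inv_mul_le_iff₀ hc', ← mul_assoc, mul_comm (‖c‖)]
    exact h x hx z hz
  have hmaps : MapsTo T (closedBall a r) (closedBall a r) := by
    intro x hx
    have hxa : ‖x - a‖ ≤ r := mem_closedBall_iff_norm.mp hx
    have hTa : ‖T a - a‖ ≤ r := by
      rw [show T a - a = -(c⁻¹ • (g a - y)) by simp [T], norm_neg, norm_smul, norm_inv,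
        inv_mul_le_iff₀ hc']
      exact hya
    rw [mem_closedBall_iff_norm, ← sub_add_sub_cancel _ (T a)]
    refine (norm_add_le_max _ _).trans (max_le ?_ hTa)
    calc ‖T x - T a‖ ≤ κ * ‖x - a‖ := hT x hx a (mem_closedBall_self hr)
      _ ≤ 1 * r := by gcongr; exact_mod_cast hκ.le
      _ = r := one_mul r
  have hcontr : ContractingWith κ (hmaps.restrict T _ _) :=
    ⟨hκ, LipschitzWith.of_dist_le_mul fun x z => by
      simpa only [Subtype.dist_eq, dist_eq_norm, MapsTo.val_restrict_apply] using hT x x.2 z z.2⟩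
  obtain ⟨x, hx, hfix, -⟩ := hcontr.exists_fixedPoint' isClosed_closedBall.isComplete hmaps
    (mem_closedBall_self hr) (edist_ne_top _ _)
  refine ⟨x, hx, ?_⟩
  have : c⁻¹ • (g x - y) = 0 := sub_eq_self.mp hfix
  rwa [smul_eq_zero_iff_right (inv_ne_zero hc), sub_eq_zero] at this

theorem ApproxSimilarityOn.image_closedBall [CompleteSpace E]
    (h : ApproxSimilarityOn g c κ (closedBall a r)) (hc : c ≠ 0) (hκ : κ < 1) :
    g '' closedBall a r = closedBall (g a) (‖c‖ * r) :=
  (h.mapsTo_closedBall hκ.le).image_subset.antisymm (h.surjOn_closedBall hc hκ)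

end ApproxSimilarity

theorem Padic.norm_two : ‖(2 : ℚ_[2])‖ = 1 / 2 := by
  simpa using Padic.norm_p (p := 2)

theorem Padic.norm_nine_div_four : ‖(9 / 4 : ℚ_[2])‖ = 4 := by
  have h9 : ‖(9 : ℚ_[2])‖ = 1 := by
    exact_mod_cast Padic.norm_natCast_eq_one_iff.mpr (by decide : Nat.Coprime 2 9)
  rw [norm_div, h9, show (4 : ℚ_[2]) = 2 ^ 2 by norm_num, norm_pow, Padic.norm_two]
  norm_num

theorem f_sub_f_sub_mul (x z : ℚ_[2]) :
    f x - f z - (9 / 4) * (x - z) = (9 / 4) * (x - z) * ((x + z) * (x + z - 2) - x * z) := by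
  simp only [f]; ring

theorem approxSimilarityOn_f :
    ApproxSimilarityOn f (9 / 4 : ℚ_[2]) (1 / 8) (closedBall 0 (1 / 4)) := by
  intro x hx z hz
  rw [mem_closedBall_zero_iff] at hx hz
  have hsum : ‖x + z‖ ≤ 1 / 4 := (norm_add_le_max _ _).trans (max_le hx hz)
  have hsum2 : ‖x + z - 2‖ ≤ 1 / 2 :=
    (norm_sub_le_max _ _).trans (max_le (hsum.trans (by norm_num)) Padic.norm_two.le)
  have hq : ‖(x + z) * (x + z - 2) - x * z‖ ≤ 1 / 8 := by
    refine (norm_sub_le_max _ _).trans (max_le ?_ ?_) <;> rw [norm_mul]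
    · calc ‖x + z‖ * ‖x + z - 2‖ ≤ 1 / 4 * (1 / 2) := by gcongr
        _ = 1 / 8 := by norm_num
    · calc ‖x‖ * ‖z‖ ≤ 1 / 4 * (1 / 4) := by gcongr
        _ ≤ 1 / 8 := by norm_num
  rw [smul_eq_mul, f_sub_f_sub_mul, norm_mul, norm_mul]
  calc _ ≤ ‖(9 / 4 : ℚ_[2])‖ * ‖x - z‖ * (1 / 8) := by gcongr
    _ = _ := by push_cast; ring

theorem f_two_pow_mem_closedBall (m : ℕ) :
    f (2 ^ (2 * (m + 1))) ∈ closedBall (2 ^ (2 * m) : ℚ_[2]) ((1 / 2) ^ (2 * m + 3)) := by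
  have hint : f (2 ^ (2 * (m + 1))) - 2 ^ (2 * m) =
      2 ^ (2 * m + 3) * ((18 * 2 ^ (4 * m) - 9 * 2 ^ (2 * m) + 1 : ℤ) : ℚ_[2]) := by
    push_cast; simp only [f]; ring
  rw [mem_closedBall_iff_norm, hint, norm_mul, norm_pow, Padic.norm_two]
  exact mul_le_of_le_one_right (by positivity) (Padic.norm_int_le_one _)

/-- For every `n ≥ 1`, `f(2^{2n} + 2^{2n+3}ℤ₂) = 2^{2n−2} + 2^{2n+1}ℤ₂` as sets. -/
theorem stmt6 (n : ℕ) (hn : 1 ≤ n) :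
    f '' {x : ℚ_[2] | ‖x - 2 ^ (2 * n)‖ ≤ (1 / 2 : ℝ) ^ (2 * n + 3)} =
      {x : ℚ_[2] | ‖x - 2 ^ (2 * n - 2)‖ ≤ (1 / 2 : ℝ) ^ (2 * n + 1)} := by
  obtain ⟨m, rfl⟩ := Nat.exists_eq_add_of_le' hn
  have hball (c : ℚ_[2]) (r : ℝ) : {x | ‖x - c‖ ≤ r} = closedBall c r :=
    Set.ext fun _ => mem_closedBall_iff_norm.symm
  have hquarter {k : ℕ} (hk : 2 ≤ k) : (1 / 2 : ℝ) ^ k ≤ 1 / 4 :=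
    (pow_le_pow_of_le_one (by norm_num) (by norm_num) hk).trans_eq (by norm_num)
  have hsub : closedBall (2 ^ (2 * (m + 1)) : ℚ_[2]) ((1 / 2) ^ (2 * (m + 1) + 3)) ⊆
      closedBall 0 (1 / 4) := by
    have hcenter : (2 ^ (2 * (m + 1)) : ℚ_[2]) ∈ closedBall 0 (1 / 4) := by
      rw [mem_closedBall_zero_iff, norm_pow, Padic.norm_two]
      exact hquarter (by omega)
    rw [closedBall_eq_of_mem hcenter]
    exact closedBall_subset_closedBall (hquarter (by omega))
  rw [hball, hball, (approxSimilarityOn_f.mono hsub).image_closedBall (by norm_num) (by norm_num),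
    Padic.norm_nine_div_four, show 2 * (m + 1) - 2 = 2 * m by omega,
    show (4 : ℝ) * (1 / 2) ^ (2 * (m + 1) + 3) = (1 / 2) ^ (2 * m + 3) by ring,
    show 2 * (m + 1) + 1 = 2 * m + 3 by ring]
  exact (closedBall_eq_of_mem (f_two_pow_mem_closedBall m)).symm
end

section
/- For every integer n ≥ 1, f(2^{2n} + 2^{2n+2} + 2^{2n+3}ℤ₂) = 2^{2n−2} + 2^{2n} + 2^{2n+1}ℤ₂ as sets. -/
open Function Set Polynomial

lemma two_eq_p : (2 : ℤ_[2]) = ((2:ℕ) : ℤ_[2]) := by norm_num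

lemma not_two_dvd_one : ¬ (2 : ℤ_[2]) ∣ (1 : ℤ_[2]) := by
  rw [two_eq_p]; exact (PadicInt.prime_p).not_dvd_one

lemma dichotomy (x : ℤ_[2]) : (2:ℤ_[2]) ∣ x ∨ (2:ℤ_[2]) ∣ (x+1) := by
  have h0 : PadicInt.toZMod (x * (x + 1)) = 0 := by
    have : ∀ r : ZMod 2, r * (r + 1) = 0 := by decide
    simpa using this (PadicInt.toZMod x)
  have hmem : x * (x + 1) ∈ RingHom.ker (PadicInt.toZMod : ℤ_[2] →+* ZMod 2) := h0
  rw [PadicInt.ker_toZMod, PadicInt.maximalIdeal_eq_span_p,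
    Ideal.mem_span_singleton] at hmem
  rw [← two_eq_p] at hmem
  have hp : Prime (2 : ℤ_[2]) := by rw [two_eq_p]; exact PadicInt.prime_p
  exact hp.2.2 _ _ hmem

lemma norm_one_of_odd (x : ℤ_[2]) (h : ¬ (2:ℤ_[2]) ∣ x) : ‖x‖ = 1 := by
  rcases lt_or_eq_of_le (PadicInt.norm_le_one x) with h1 | h1
  · exact absurd ((PadicInt.norm_lt_one_iff_dvd x).mp h1) (by rwa [← two_eq_p])
  · exact h1

lemma norm_lt_one_of_even (x : ℤ_[2]) (h : (2:ℤ_[2]) ∣ x) : ‖x‖ < 1 := by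
  rw [PadicInt.norm_lt_one_iff_dvd]; rwa [← two_eq_p]

lemma odd_of (x : ℤ_[2]) (c : ℤ_[2]) (h : x = 2 * c + 1) : ¬ (2:ℤ_[2]) ∣ x := by
  intro hd
  apply not_two_dvd_one
  have : (1 : ℤ_[2]) = x - 2 * c := by rw [h]; ring
  rw [this]
  exact dvd_sub hd ⟨c, rfl⟩

lemma surj (M S : ℤ_[2]) : ∃ z : ℤ_[2],
    9216*M^2*z^3 + (17280*M^2 - 576*M)*z^2 + (10800*M^2 - 720*M + 9)*z
      + (2250*M^2 - 225*M + 5) = S := by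
  set F : Polynomial ℤ_[2] :=
    C (2250*M^2 - 225*M + 5 - S) + C (10800*M^2 - 720*M + 9) * X
      + C (17280*M^2 - 576*M) * X^2 + C (9216*M^2) * X^3 with hF
  have hderiv : F.derivative =
      C (10800*M^2 - 720*M + 9) + C (2*(17280*M^2 - 576*M)) * X
        + C (3*(9216*M^2)) * X^2 := by
    rw [hF]
    simp only [derivative_add, derivative_mul, derivative_C, derivative_X,
      derivative_X_pow, zero_mul, mul_one, zero_add, add_zero]
    simp only [C_add, C_sub, C_mul, C_pow, map_ofNat, map_natCast]
    push_cast
    ring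
  have key : ∀ a : ℤ_[2], ‖F.eval a‖ < ‖F.derivative.eval a‖ ^ 2 →
      ∃ z : ℤ_[2], 9216*M^2*z^3 + (17280*M^2 - 576*M)*z^2 + (10800*M^2 - 720*M + 9)*z
        + (2250*M^2 - 225*M + 5) = S := by
    intro a hnorm
    obtain ⟨z, hz, -⟩ := hensels_lemma hnorm
    refine ⟨z, ?_⟩
    rw [coe_aeval_eq_eval] at hz
    simp only [hF, eval_add, eval_mul, eval_pow, eval_C, eval_X] at hz
    linear_combination hz
  rcases dichotomy (2250*M^2 - 225*M + 5 - S) with h | h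
  · apply key 0
    have he : F.eval 0 = 2250*M^2 - 225*M + 5 - S := by
      simp only [hF, eval_add, eval_mul, eval_pow, eval_C, eval_X]; ring
    have hd : F.derivative.eval 0 = 10800*M^2 - 720*M + 9 := by
      simp only [hderiv, eval_add, eval_mul, eval_pow, eval_C, eval_X]; ring
    rw [he, hd,
      norm_one_of_odd (10800*M^2 - 720*M + 9) (odd_of _ (5400*M^2 - 360*M + 4) (by ring)),
      one_pow]
    exact norm_lt_one_of_even _ h
  · apply key 1
    have he : F.eval 1 = (2250*M^2 - 225*M + 5 - S + 1) + 2*(18648*M^2 - 648*M + 4) := by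
      simp only [hF, eval_add, eval_mul, eval_pow, eval_C, eval_X]; ring
    have hd : F.derivative.eval 1 = 73008*M^2 - 1872*M + 9 := by
      simp only [hderiv, eval_add, eval_mul, eval_pow, eval_C, eval_X]; ring
    rw [he, hd,
      norm_one_of_odd (73008*M^2 - 1872*M + 9) (odd_of _ (36504*M^2 - 936*M + 4) (by ring)),
      one_pow]
    exact norm_lt_one_of_even _ (dvd_add h ⟨_, rfl⟩)

lemma coe_ofNat' (n : ℕ) [n.AtLeastTwo] :
    ((OfNat.ofNat n : ℤ_[2]) : ℚ_[2]) = OfNat.ofNat n := by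
  rw [← Nat.cast_ofNat (R := ℤ_[2]), PadicInt.coe_natCast, Nat.cast_ofNat]

lemma coe_poly (M T : ℤ_[2]) :
    ((9216*M^2*T^3 + (17280*M^2 - 576*M)*T^2 + (10800*M^2 - 720*M + 9)*T
      + (2250*M^2 - 225*M + 5) : ℤ_[2]) : ℚ_[2])
    = 9216*(M:ℚ_[2])^2*(T:ℚ_[2])^3 + (17280*(M:ℚ_[2])^2 - 576*(M:ℚ_[2]))*(T:ℚ_[2])^2
      + (10800*(M:ℚ_[2])^2 - 720*(M:ℚ_[2]) + 9)*(T:ℚ_[2]) + (2250*(M:ℚ_[2])^2 - 225*(M:ℚ_[2]) + 5) := by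
  norm_cast

lemma fkey (m t : ℚ_[2]) : f (20*m + 32*m*t) =
    5*m + 8*m*(9216*m^2*t^3 + (17280*m^2 - 576*m)*t^2 + (10800*m^2 - 720*m + 9)*t
      + (2250*m^2 - 225*m + 5)) := by
  simp only [f]; ring

lemma norm_two_q : ‖(2 : ℚ_[2])‖ = 1/2 := by
  rw [show (2:ℚ_[2]) = ((2:ℕ):ℚ_[2]) by norm_num, Padic.norm_p]
  norm_num

lemma norm_two_pow (j : ℕ) : ‖(2 : ℚ_[2])^j‖ = (1/2 : ℝ)^j := by
  rw [norm_pow, norm_two_q]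

/-- For every `n ≥ 1`,
`f(2^{2n} + 2^{2n+2} + 2^{2n+3}ℤ₂) = 2^{2n−2} + 2^{2n} + 2^{2n+1}ℤ₂` as sets. -/
theorem stmt8 (n : ℕ) (hn : 1 ≤ n) :
    f '' {x : ℚ_[2] | ‖x - (2 ^ (2 * n) + 2 ^ (2 * n + 2))‖ ≤ (1 / 2 : ℝ) ^ (2 * n + 3)} =
      {x : ℚ_[2] | ‖x - (2 ^ (2 * n - 2) + 2 ^ (2 * n))‖ ≤ (1 / 2 : ℝ) ^ (2 * n + 1)} := by
  obtain ⟨k, rfl⟩ : ∃ k, n = k + 1 := ⟨n - 1, by omega⟩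
  set m : ℚ_[2] := (2:ℚ_[2])^(2*k) with hm
  have hm0 : m ≠ 0 := pow_ne_zero _ two_ne_zero
  obtain ⟨M, hM⟩ : ∃ M : ℤ_[2], (M : ℚ_[2]) = m :=
    ⟨(2:ℤ_[2])^(2*k), by push_cast; rfl⟩
  have e1 : (2:ℚ_[2]) ^ (2 * (k+1)) + 2 ^ (2 * (k+1) + 2) = 20 * m := by
    rw [show 2*(k+1) = 2*k + 2 by omega, show 2*k+2+2 = 2*k+4 by omega, pow_add, pow_add, hm]
    ring
  have e2 : (2:ℚ_[2]) ^ (2 * (k+1) - 2) + 2 ^ (2 * (k+1)) = 5 * m := by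
    rw [show 2*(k+1) - 2 = 2*k by omega, show 2*(k+1) = 2*k+2 by omega, pow_add, hm]
    ring
  have hn32 : ‖(32:ℚ_[2]) * m‖ = (1/2 : ℝ)^(2*k+5) := by
    rw [show (32:ℚ_[2]) * m = 2^(2*k+5) by rw [pow_add, hm]; ring, norm_two_pow]
  have hn8 : ‖(8:ℚ_[2]) * m‖ = (1/2 : ℝ)^(2*k+3) := by
    rw [show (8:ℚ_[2]) * m = 2^(2*k+3) by rw [pow_add, hm]; ring, norm_two_pow]
  have h32pos : (0:ℝ) < ‖(32:ℚ_[2]) * m‖ := by rw [hn32]; positivity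
  have h8pos : (0:ℝ) < ‖(8:ℚ_[2]) * m‖ := by rw [hn8]; positivity
  ext y
  simp only [Set.mem_image, Set.mem_setOf_eq]
  constructor
  · rintro ⟨x, hx, rfl⟩
    rw [e1, show 2*(k+1)+3 = 2*k+5 by omega, ← hn32] at hx
    set t : ℚ_[2] := (x - 20*m)/(32*m) with ht
    have ht1 : ‖t‖ ≤ 1 := by
      rw [ht, norm_div, div_le_one h32pos]
      exact hx
    have hx' : x = 20*m + 32*m*t := by
      rw [ht]; field_simp; ring
    obtain ⟨T, hT⟩ : ∃ T : ℤ_[2], (T : ℚ_[2]) = t := ⟨⟨t, ht1⟩, rfl⟩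
    have hfx : f x - 5*m = (8*m) *
        ((9216*M^2*T^3 + (17280*M^2 - 576*M)*T^2 + (10800*M^2 - 720*M + 9)*T
          + (2250*M^2 - 225*M + 5) : ℤ_[2]) : ℚ_[2]) := by
      rw [coe_poly, hM, hT, hx', fkey]
      ring
    rw [e2, show 2*(k+1)+1 = 2*k+3 by omega]
    rw [hfx, norm_mul]
    calc ‖(8:ℚ_[2])*m‖ * ‖((9216*M^2*T^3 + (17280*M^2 - 576*M)*T^2
            + (10800*M^2 - 720*M + 9)*T + (2250*M^2 - 225*M + 5) : ℤ_[2]) : ℚ_[2])‖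
          ≤ ‖(8:ℚ_[2])*m‖ * 1 := by
          gcongr
          exact PadicInt.norm_le_one _
      _ = (1/2 : ℝ)^(2*k+3) := by rw [mul_one, hn8]
  · intro hy
    rw [e2, show 2*(k+1)+1 = 2*k+3 by omega, ← hn8] at hy
    set s : ℚ_[2] := (y - 5*m)/(8*m) with hs
    have hs1 : ‖s‖ ≤ 1 := by
      rw [hs, norm_div, div_le_one h8pos]
      exact hy
    obtain ⟨S, hS⟩ : ∃ S : ℤ_[2], (S : ℚ_[2]) = s := ⟨⟨s, hs1⟩, rfl⟩
    obtain ⟨z, hz⟩ := surj M S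
    refine ⟨20*m + 32*m*(z : ℚ_[2]), ?_, ?_⟩
    · rw [e1, show 2*(k+1)+3 = 2*k+5 by omega, ← hn32,
        show 20*m + 32*m*(z:ℚ_[2]) - 20*m = (32*m)*(z:ℚ_[2]) by ring, norm_mul]
      calc ‖(32:ℚ_[2])*m‖ * ‖(z:ℚ_[2])‖ ≤ ‖(32:ℚ_[2])*m‖ * 1 := by
            gcongr
            exact PadicInt.norm_le_one _
        _ = ‖(32:ℚ_[2])*m‖ := mul_one _
    · rw [fkey]
      have hzq : 9216*m^2*(z:ℚ_[2])^3 + (17280*m^2 - 576*m)*(z:ℚ_[2])^2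
          + (10800*m^2 - 720*m + 9)*(z:ℚ_[2]) + (2250*m^2 - 225*m + 5) = s := by
        have h := congrArg (fun w : ℤ_[2] => (w : ℚ_[2])) hz
        rw [coe_poly, hM, hS] at h
        exact h
      rw [hzq, hs]
      field_simp
      ring
end

section
/- For every integer n ≥ 1: f(2^{2n+1} + 2^{2n+2}ℤ₂) = 2^{2n−1} + 2^{2n}ℤ₂ as sets; moreover the (n+1)-st iterate satisfies f^[n+1](2^{2n+1} + 2^{2n+2}ℤ₂) = 2^{−1} + ℤ₂, so in particular every point of this iterated image has 2-adic absolute value 2 > 1 (and hence escapes to ∞ under further iteration). -/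
open Function Set Filter
open Polynomial

lemma norm2 : ‖(2:ℚ_[2])‖ = 1/2 := by
  have := @Padic.norm_p 2 _; norm_num at this ⊢; exact this

lemma norm9 : ‖(9:ℚ_[2])‖ = 1 := by
  have h1 : ‖((9:ℤ) : ℚ_[2])‖ ≤ 1 := Padic.norm_int_le_one 9
  have h2 : ¬ ‖((9:ℤ) : ℚ_[2])‖ < 1 := by
    rw [Padic.norm_intCast_lt_one_iff]; decide
  push_cast at h1 h2; linarith

lemma norm4 : ‖(4:ℚ_[2])‖ = 1/4 := by
  rw [show (4:ℚ_[2]) = 2*2 by norm_num, norm_mul, norm2]; norm_num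

lemma norm8 : ‖(8:ℚ_[2])‖ = 1/8 := by
  rw [show (8:ℚ_[2]) = 2*(2*2) by norm_num, norm_mul, norm_mul, norm2]; norm_num

lemma unit_mul {a b : ℚ_[2]} {r : ℝ} (hr : r ≤ 1) (ha : ‖a-1‖ ≤ r) (hb : ‖b-1‖ ≤ r) :
    ‖a*b-1‖ ≤ r := by
  have hA : ‖a‖ ≤ 1 := by
    have h1 : a = (a-1)+1 := by ring
    rw [h1]
    refine le_trans (Padic.nonarchimedean _ _) ?_
    rw [norm_one]; exact max_le (le_trans ha hr) le_rfl
  have h2 : a*b-1 = a*(b-1)+(a-1) := by ring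
  rw [h2]
  refine le_trans (Padic.nonarchimedean _ _) (max_le ?_ ha)
  calc ‖a*(b-1)‖ = ‖a‖*‖b-1‖ := norm_mul _ _
  _ ≤ 1 * r := by
      exact mul_le_mul hA hb (norm_nonneg _) zero_le_one
  _ = r := one_mul r

lemma key_fwd (m : ℕ) {x : ℚ_[2]} (hx : ‖x - 2 ^ (2*m+1)‖ ≤ (1/2:ℝ) ^ (2*m+2)) :
    ‖f x - 2 ^ (2*m+1) / 4‖ ≤ (1/2:ℝ) ^ (2*m) := by
  set c : ℚ_[2] := 2 ^ (2*m+1) with hc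
  have hcnorm : ‖c‖ = (1/2:ℝ)^(2*m+1) := by rw [hc, norm_pow, norm2]
  have hc0 : c ≠ 0 := pow_ne_zero _ two_ne_zero
  have hxn : ‖x‖ ≤ (1/2:ℝ)^(2*m+1) := by
    have h1 : x = (x - c) + c := by ring
    rw [h1]
    refine le_trans (Padic.nonarchimedean _ _) (max_le ?_ (le_of_eq hcnorm))
    exact le_trans hx (pow_le_pow_of_le_one (by norm_num) (by norm_num) (by omega))
  -- ‖x*(x-2)‖ ≤ 1/8
  have hw : ‖x*(x-2)‖ ≤ (1/8:ℝ) := by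
    rcases Nat.eq_zero_or_pos m with hm | hm
    · subst hm
      have h2 : c = 2 := by rw [hc]; norm_num
      rw [norm_mul, ← h2]
      have h4 : ‖x - c‖ ≤ (1/4:ℝ) := le_trans hx (by norm_num)
      have h5 : ‖x‖ ≤ (1/2:ℝ) := le_trans hxn (by norm_num)
      calc ‖x‖ * ‖x - c‖ ≤ (1/2) * (1/4) := by
            apply mul_le_mul h5 h4 (norm_nonneg _) (by norm_num)
      _ = 1/8 := by norm_num
    · have hxn' : ‖x‖ ≤ (1/8:ℝ) := by
        refine le_trans hxn (le_trans (show ((1:ℝ)/2)^(2*m+1) ≤ (1/2)^3 from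
          pow_le_pow_of_le_one (by norm_num) (by norm_num) (by omega)) (by norm_num))
      have hx2 : ‖x - 2‖ ≤ 1 := by
        rw [sub_eq_add_neg]
        refine le_trans (Padic.nonarchimedean _ _) (max_le ?_ ?_)
        · exact le_trans hxn' (by norm_num)
        · rw [norm_neg, norm2]; norm_num
      rw [norm_mul]
      calc ‖x‖ * ‖x - 2‖ ≤ (1/8) * 1 :=
        mul_le_mul hxn' hx2 (norm_nonneg _) (by norm_num)
      _ = 1/8 := by norm_num
  -- main
  have hkey : ‖(9*(x/c))*(x-1)^2 - 1‖ ≤ (1/2:ℝ) := by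
    apply unit_mul (by norm_num : (1/2:ℝ) ≤ 1)
    · apply unit_mul (by norm_num : (1/2:ℝ) ≤ 1)
      · have h9 : (9:ℚ_[2]) - 1 = 8 := by norm_num
        rw [h9, norm8]; norm_num
      · have : x/c - 1 = (x - c)/c := by field_simp
        rw [this, norm_div, hcnorm]
        rw [div_le_iff₀ (by positivity)]
        calc ‖x - c‖ ≤ (1/2:ℝ)^(2*m+2) := hx
        _ = (1/2) * (1/2)^(2*m+1) := by rw [pow_succ]; ring
        _ ≤ _ := by norm_num
    · have h3 : (x-1)^2 - 1 = x*(x-2) := by ring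
      rw [h3]; exact le_trans hw (by norm_num)
  have hsplit : f x - c/4 = (c/4) * ((9*(x/c))*(x-1)^2 - 1) := by
    simp only [f]; field_simp
  rw [hsplit, norm_mul, norm_div, hcnorm, norm4]
  calc (1/2:ℝ)^(2*m+1) / (1/4) * ‖9 * (x / c) * (x - 1) ^ 2 - 1‖
      ≤ (1/2:ℝ)^(2*m+1) / (1/4) * (1/2) := by
        apply mul_le_mul_of_nonneg_left hkey (by positivity)
  _ = (1/2)^(2*m) * ((1/2) * 4 * (1/2)) := by rw [pow_succ]; ring
  _ = (1/2)^(2*m) := by norm_num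

lemma key_bwd (m : ℕ) {y : ℚ_[2]} (hy : ‖y - 2 ^ (2*m+1) / 4‖ ≤ (1/2:ℝ) ^ (2*m)) :
    ∃ x : ℚ_[2], ‖x - 2 ^ (2*m+1)‖ ≤ (1/2:ℝ) ^ (2*m+2) ∧ f x = y := by
  set c : ℚ_[2] := 2 ^ (2*m+1) with hc
  have hcnorm : ‖c‖ = (1/2:ℝ)^(2*m+1) := by rw [hc, norm_pow, norm2]
  have hc0 : c ≠ 0 := pow_ne_zero _ two_ne_zero
  set v : ℚ_[2] := 4 * y / c with hv
  have hv1 : ‖v - 1‖ ≤ (1/2:ℝ) := by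
    have h1 : v - 1 = (4/c) * (y - c/4) := by rw [hv]; field_simp
    rw [h1, norm_mul, norm_div, norm4, hcnorm]
    calc (1/4:ℝ) / (1/2)^(2*m+1) * ‖y - c/4‖
        ≤ (1/4:ℝ) / (1/2)^(2*m+1) * (1/2)^(2*m) := by
          apply mul_le_mul_of_nonneg_left hy (by positivity)
    _ = 1/2 := by rw [pow_succ]; field_simp; ring
  have hvZ : ‖v‖ ≤ 1 := by
    have h1 : v = (v-1)+1 := by ring
    rw [h1]
    refine le_trans (Padic.nonarchimedean _ _) (max_le (le_trans hv1 (by norm_num)) (by simp))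
  have htZ : ‖(v-1)/2‖ ≤ 1 := by
    rw [norm_div, norm2]
    calc ‖v-1‖/(1/2:ℝ) ≤ (1/2)/(1/2) := by
          apply div_le_div_of_nonneg_right hv1 (by norm_num)
    _ = 1 := by norm_num
  set V : ℤ_[2] := ⟨v, hvZ⟩ with hV
  set T : ℤ_[2] := ⟨(v-1)/2, htZ⟩ with hT
  set Cz : ℤ_[2] := 2 ^ (2*m+1) with hCz
  have hCzc : ((Cz : ℚ_[2])) = c := by
    rw [hCz, hc, PadicInt.coe_pow, show ((2:ℤ_[2]):ℚ_[2]) = 2 from rfl]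
  have hCznorm : ‖Cz‖ = (1/2:ℝ)^(2*m+1) := by rw [PadicInt.norm_def]; rw [hCzc]; exact hcnorm
  have hVnorm : ‖V‖ ≤ 1 := hvZ
  have hVc : ((V:ℚ_[2])) = v := rfl
  have h2T : (1 + 2*T : ℤ_[2]) = V := by
    apply PadicInt.ext
    rw [hT, hV]
    show (1:ℚ_[2]) + 2 * ((v-1)/2) = v
    field_simp
    ring
  set F : Polynomial ℤ_[2] := C 9 * (1 + C 2 * X) * (C Cz * (1 + C 2 * X) - 1)^2 - C V with hF
  set W : ℤ_[2] := Cz * V - 1 with hW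
  -- norms of small things
  have hCzV : ‖Cz * V‖ ≤ (1/2:ℝ)^(2*m+1) := by
    rw [norm_mul, hCznorm]
    calc (1/2:ℝ)^(2*m+1) * ‖V‖ ≤ (1/2)^(2*m+1) * 1 :=
      mul_le_mul_of_nonneg_left hVnorm (by positivity)
    _ = _ := mul_one _
  have hCzVhalf : ‖Cz * V‖ ≤ (1/2:ℝ) := by
    refine le_trans hCzV (le_trans (show ((1:ℝ)/2)^(2*m+1) ≤ (1/2)^1 from
      pow_le_pow_of_le_one (by norm_num) (by norm_num) (by omega)) (by norm_num))
  have hWnorm : ‖W‖ = 1 := by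
    rw [hW, sub_eq_add_neg, PadicInt.norm_add_eq_max_of_ne]
    · rw [norm_neg, norm_one]
      exact max_eq_right (le_trans hCzVhalf (by norm_num))
    · rw [norm_neg, norm_one]
      intro h; rw [h] at hCzVhalf; norm_num at hCzVhalf
  have hWsq : ‖W^2 - 1‖ ≤ (1/8:ℝ) := by
    have h1 : W^2 - 1 = (Cz*V) * (Cz*V - 2) := by rw [hW]; ring
    rw [h1, norm_mul]
    rcases Nat.eq_zero_or_pos m with hm | hm
    · subst hm
      have h2 : (Cz*V - 2 : ℤ_[2]) = 2*(V - 1) := by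
        rw [hCz]; push_cast; ring
      have h3 : ‖(V - 1 : ℤ_[2])‖ ≤ (1/2:ℝ) := by
        rw [PadicInt.norm_def]; push_cast [hVc]; exact hv1
      have h4 : ‖(Cz*V - 2 : ℤ_[2])‖ ≤ (1/4:ℝ) := by
        rw [h2, norm_mul, show ‖(2:ℤ_[2])‖ = (1/2:ℝ) from by
          rw [PadicInt.norm_def]; exact norm2]
        calc (1/2:ℝ) * ‖(V-1:ℤ_[2])‖ ≤ (1/2)*(1/2) :=
          mul_le_mul_of_nonneg_left h3 (by norm_num)
        _ = 1/4 := by norm_num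
      calc ‖Cz*V‖ * ‖Cz*V - 2‖ ≤ (1/2) * (1/4) :=
        mul_le_mul (le_trans hCzV (by norm_num)) h4 (norm_nonneg _) (by norm_num)
      _ = 1/8 := by norm_num
    · have h4 : ‖(Cz*V - 2 : ℤ_[2])‖ ≤ 1 := by
        rw [sub_eq_add_neg]
        refine le_trans (PadicInt.nonarchimedean _ _) (max_le (le_trans hCzVhalf (by norm_num)) ?_)
        rw [norm_neg, show ‖(2:ℤ_[2])‖ = (1/2:ℝ) from by
          rw [PadicInt.norm_def]; exact norm2]; norm_num
      have h5 : ‖Cz * V‖ ≤ (1/8:ℝ) := by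
        refine le_trans hCzV (le_trans (show ((1:ℝ)/2)^(2*m+1) ≤ (1/2)^3 from
          pow_le_pow_of_le_one (by norm_num) (by norm_num) (by omega)) (by norm_num))
      calc ‖Cz*V‖ * ‖Cz*V - 2‖ ≤ (1/8) * 1 :=
        mul_le_mul h5 h4 (norm_nonneg _) (by norm_num)
      _ = 1/8 := by norm_num
  -- eval of F at T
  have hFT : F.eval T = V * (9*W^2 - 1) := by
    rw [hF]
    simp only [eval_sub, eval_mul, eval_add, eval_pow, eval_one, eval_C, eval_X]
    rw [h2T, hW]; ring
  have h9Z : ‖(9:ℤ_[2])‖ = 1 := by rw [PadicInt.norm_def]; exact norm9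
  have h8Z : ‖(8:ℤ_[2])‖ = 1/8 := by rw [PadicInt.norm_def]; exact norm8
  have hFTnorm : ‖F.eval T‖ ≤ (1/8:ℝ) := by
    rw [hFT, norm_mul]
    have h1 : (9*W^2 - 1 : ℤ_[2]) = 8 + 9*(W^2 - 1) := by ring
    have h2 : ‖(9*W^2 - 1 : ℤ_[2])‖ ≤ (1/8:ℝ) := by
      rw [h1]
      refine le_trans (PadicInt.nonarchimedean _ _) (max_le (le_of_eq h8Z) ?_)
      rw [norm_mul, h9Z, one_mul]; exact hWsq
    calc ‖V‖ * ‖(9*W^2-1:ℤ_[2])‖ ≤ 1 * (1/8) :=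
      mul_le_mul hVnorm h2 (norm_nonneg _) (by norm_num)
    _ = 1/8 := by norm_num
  -- derivative
  have hFdT : F.derivative.eval T = 18*W^2 + 36*Cz*(V*W) := by
    rw [hF]
    simp only [derivative_sub, derivative_mul, derivative_add, derivative_one,
      derivative_C, derivative_X, derivative_pow, eval_sub, eval_mul, eval_add,
      eval_pow, eval_one, eval_C, eval_X, eval_natCast, eval_zero, mul_zero, zero_mul,
      add_zero, zero_add, eval_ofNat]
    rw [h2T, hW]
    push_cast
    ring
  have h18Z : ‖(18:ℤ_[2])‖ = 1/2 := by
    rw [PadicInt.norm_def]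
    show ‖(18:ℚ_[2])‖ = 1/2
    rw [show (18:ℚ_[2]) = 2*9 by norm_num, norm_mul, norm2, norm9]; norm_num
  have h36Z : ‖(36:ℤ_[2])‖ = 1/4 := by
    rw [PadicInt.norm_def]
    show ‖(36:ℚ_[2])‖ = 1/4
    rw [show (36:ℚ_[2]) = 4*9 by norm_num, norm_mul, norm4, norm9]; norm_num
  have hbig : ‖(18*W^2 : ℤ_[2])‖ = 1/2 := by
    rw [norm_mul, norm_pow, hWnorm, h18Z]; norm_num
  have hCzhalf : ‖Cz‖ ≤ (1/2:ℝ) := by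
    rw [hCznorm]
    refine le_trans (show ((1:ℝ)/2)^(2*m+1) ≤ (1/2)^1 from
      pow_le_pow_of_le_one (by norm_num) (by norm_num) (by omega)) (by norm_num)
  have hVW : ‖(V*W:ℤ_[2])‖ ≤ 1 := by
    rw [norm_mul, hWnorm, mul_one]; exact hVnorm
  have hsmall : ‖(36*Cz*(V*W) : ℤ_[2])‖ < 1/2 := by
    rw [norm_mul, norm_mul, h36Z]
    nlinarith [norm_nonneg Cz, norm_nonneg (V*W:ℤ_[2]), hCzhalf, hVW]
  have hne : ‖(18*W^2 : ℤ_[2])‖ ≠ ‖(36*Cz*(V*W) : ℤ_[2])‖ := by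
    rw [hbig]; exact ne_of_gt hsmall
  have hFdTnorm : ‖F.derivative.eval T‖ = 1/2 := by
    rw [hFdT, PadicInt.norm_add_eq_max_of_ne hne, hbig]
    exact max_eq_left (le_of_lt hsmall)
  have hnorm : ‖F.eval T‖ < ‖F.derivative.eval T‖^2 := by
    rw [hFdTnorm]
    refine lt_of_le_of_lt hFTnorm ?_
    norm_num
  obtain ⟨z, hz, -, -, -⟩ := hensels_lemma hnorm
  have hζ1 : ‖(z:ℚ_[2])‖ ≤ 1 := z.2
  refine ⟨c * (1 + 2*(z:ℚ_[2])), ?_, ?_⟩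
  · have h1 : c * (1 + 2*(z:ℚ_[2])) - c = c * 2 * (z:ℚ_[2]) := by ring
    rw [h1, norm_mul, norm_mul, hcnorm, norm2]
    calc (1/2:ℝ)^(2*m+1) * (1/2) * ‖(z:ℚ_[2])‖ ≤ (1/2)^(2*m+1) * (1/2) * 1 := by
          apply mul_le_mul_of_nonneg_left hζ1 (by positivity)
    _ = (1/2)^(2*m+2) := by rw [pow_succ]; ring
  · have hEvz : F.eval z = 9*(1+2*z)*(Cz*(1+2*z)-1)^2 - V := by
      rw [hF]
      simp only [eval_sub, eval_mul, eval_add, eval_pow, eval_one, eval_C, eval_X]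
    have hEq : (9*(1+2*z)*(Cz*(1+2*z)-1)^2 : ℤ_[2]) = V := by
      rw [← sub_eq_zero, ← hEvz, ← Polynomial.coe_aeval_eq_eval, hz]
    have h0 := congrArg (fun t : ℤ_[2] => (t : ℚ_[2])) hEq
    simp only [PadicInt.coe_mul, PadicInt.coe_add, PadicInt.coe_sub, PadicInt.coe_pow,
      PadicInt.coe_one] at h0
    rw [hCzc] at h0
    have h0' : (9 * (1+2*(z:ℚ_[2])) * (c*(1+2*(z:ℚ_[2])) - 1)^2 : ℚ_[2]) = v := h0
    have hcv : c/4 * v = y := by rw [hv]; field_simp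
    show (9 / 4 : ℚ_[2]) * (c * (1 + 2*(z:ℚ_[2]))) * ((c * (1 + 2*(z:ℚ_[2]))) - 1) ^ 2 = y
    linear_combination (c/4) * h0' + hcv

lemma key (m : ℕ) :
    f '' {x : ℚ_[2] | ‖x - 2 ^ (2*m+1)‖ ≤ (1/2:ℝ) ^ (2*m+2)} =
      {x : ℚ_[2] | ‖x - 2 ^ (2*m+1) / 4‖ ≤ (1/2:ℝ) ^ (2*m)} := by
  ext y
  constructor
  · rintro ⟨x, hx, rfl⟩
    exact key_fwd m hx
  · intro hy
    obtain ⟨x, hx, hfx⟩ := key_bwd m hy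
    exact ⟨x, hx, hfx⟩

lemma stepD (m : ℕ) :
    f '' {x : ℚ_[2] | ‖x - 2 ^ (2*(m+1)+1)‖ ≤ (1/2:ℝ) ^ (2*(m+1)+2)} =
      {x : ℚ_[2] | ‖x - 2 ^ (2*m+1)‖ ≤ (1/2:ℝ) ^ (2*m+2)} := by
  rw [key (m+1)]
  have h1 : (2:ℚ_[2]) ^ (2*(m+1)+1) / 4 = 2 ^ (2*m+1) := by
    rw [show 2*(m+1)+1 = (2*m+1)+1+1 by ring, pow_succ, pow_succ]
    field_simp; ring
  have h2 : 2*(m+1) = 2*m+2 := by ring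
  rw [h1, h2]

lemma iterD : ∀ k m : ℕ,
    f^[k] '' {x : ℚ_[2] | ‖x - 2 ^ (2*(m+k)+1)‖ ≤ (1/2:ℝ) ^ (2*(m+k)+2)} =
      {x : ℚ_[2] | ‖x - 2 ^ (2*m+1)‖ ≤ (1/2:ℝ) ^ (2*m+2)} := by
  intro k
  induction k with
  | zero => intro m; simp
  | succ k ih =>
    intro m
    have h1 : m + (k+1) = (m+k) + 1 := by ring
    rw [h1, iterate_succ, Set.image_comp, stepD (m+k), ih m]

lemma fgrow {x : ℚ_[2]} (hx : (2:ℝ) ≤ ‖x‖) : ‖f x‖ = 4 * ‖x‖^3 := by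
  have hx1 : ‖x - 1‖ = ‖x‖ := by
    rw [sub_eq_add_neg, Padic.add_eq_max_of_ne]
    · rw [norm_neg, norm_one]; exact max_eq_left (by linarith)
    · rw [norm_neg, norm_one]; intro h; rw [h] at hx; linarith
  have h94 : ‖(9/4 : ℚ_[2])‖ = 4 := by
    rw [norm_div, norm9, norm4]; norm_num
  show ‖(9 / 4 : ℚ_[2]) * x * (x - 1) ^ 2‖ = 4 * ‖x‖^3
  rw [norm_mul, norm_mul, norm_pow, hx1, h94]
  ring

lemma escape {y : ℚ_[2]} (hy : ‖y - 2⁻¹‖ ≤ 1) :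
    ‖y‖ = 2 ∧ (1:ℝ) < ‖y‖ ∧ Tendsto (fun k : ℕ => ‖f^[k] y‖) atTop atTop := by
  have hinv : ‖(2⁻¹ : ℚ_[2])‖ = 2 := by
    rw [norm_inv, norm2]; norm_num
  have hy2 : ‖y‖ = 2 := by
    have h1 : y = (y - 2⁻¹) + 2⁻¹ := by ring
    rw [h1, Padic.add_eq_max_of_ne, hinv]
    · exact max_eq_right (by linarith)
    · rw [hinv]; intro h; rw [h] at hy; linarith
  have hbound : ∀ k : ℕ, (2:ℝ)^(k+1) ≤ ‖f^[k] y‖ := by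
    intro k
    induction k with
    | zero => simp [hy2]
    | succ k ih =>
      have h2k : (2:ℝ) ≤ (2:ℝ)^(k+1) := by
        calc (2:ℝ) = 2^1 := (pow_one 2).symm
        _ ≤ 2^(k+1) := pow_le_pow_right₀ (by norm_num) (by omega)
      have ha : (2:ℝ) ≤ ‖f^[k] y‖ := le_trans h2k ih
      rw [iterate_succ_apply', fgrow ha]
      have h3 : (2:ℝ)^(k+1+1) = 2 * 2^(k+1) := by ring
      rw [h3]
      nlinarith [ih, ha, sq_nonneg (‖f^[k] y‖)]
  refine ⟨hy2, by rw [hy2]; norm_num, ?_⟩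
  apply tendsto_atTop_mono hbound
  exact (tendsto_pow_atTop_atTop_of_one_lt (by norm_num : (1:ℝ) < 2)).comp
    (tendsto_add_atTop_nat 1)

/-- For every `n ≥ 1`: `f(2^{2n+1} + 2^{2n+2}ℤ₂) = 2^{2n−1} + 2^{2n}ℤ₂` as sets; moreover
`f^[n+1](2^{2n+1} + 2^{2n+2}ℤ₂) = 2^{−1} + ℤ₂`, so every point `y` of this iterated image has
`|y|₂ = 2 > 1` and escapes to `∞` under further iteration. -/
theorem stmt9 (n : ℕ) (hn : 1 ≤ n) :
    (f '' {x : ℚ_[2] | ‖x - 2 ^ (2 * n + 1)‖ ≤ (1 / 2 : ℝ) ^ (2 * n + 2)} =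
        {x : ℚ_[2] | ‖x - 2 ^ (2 * n - 1)‖ ≤ (1 / 2 : ℝ) ^ (2 * n)}) ∧
    (f^[n + 1] '' {x : ℚ_[2] | ‖x - 2 ^ (2 * n + 1)‖ ≤ (1 / 2 : ℝ) ^ (2 * n + 2)} =
        {x : ℚ_[2] | ‖x - 2⁻¹‖ ≤ 1}) ∧
    (∀ y ∈ f^[n + 1] '' {x : ℚ_[2] | ‖x - 2 ^ (2 * n + 1)‖ ≤ (1 / 2 : ℝ) ^ (2 * n + 2)},
        ‖y‖ = 2 ∧ (1 : ℝ) < ‖y‖ ∧ Tendsto (fun k : ℕ => ‖f^[k] y‖) atTop atTop) := by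
  have hpart2 : f^[n + 1] '' {x : ℚ_[2] | ‖x - 2 ^ (2 * n + 1)‖ ≤ (1 / 2 : ℝ) ^ (2 * n + 2)} =
      {x : ℚ_[2] | ‖x - 2⁻¹‖ ≤ 1} := by
    rw [iterate_succ', Set.image_comp]
    have h := iterD n 0
    simp only [zero_add] at h
    rw [h, key 0]
    ext x
    simp only [Set.mem_setOf_eq]
    norm_num
  refine ⟨?_, hpart2, ?_⟩
  · obtain ⟨m, rfl⟩ : ∃ m, n = m + 1 := ⟨n - 1, (Nat.succ_pred_eq_of_pos hn).symm⟩
    rw [key (m+1)]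
    have h1 : (2:ℚ_[2]) ^ (2*(m+1)+1) / 4 = 2 ^ (2*(m+1)-1) := by
      rw [show 2*(m+1)+1 = (2*(m+1)-1)+1+1 by omega, pow_succ, pow_succ]
      field_simp; ring
    rw [h1]
  · intro y hy
    rw [hpart2] at hy
    exact escape hy
end
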